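/- For all IPC formulas X, Y, Z: if Z is deducible in IPC from the single hypothesis X, and Z is deducible in IPC from the single hypothesis Y, then Z is deducible in IPC from the single hypothesis X ∨ Y, where X ∨ Y denotes (X ⊃ Y) ⊃ Y. -/
import Mathlib


/-- Formulas of the Implicational Propositional Calculus: propositional
variables and implication. -/
inductive IPCFormula : Type where
  | var : ℕ → IPCFormula
  | imp : IPCFormula → IPCFormula → IPCFormula

infixr:60 " ⊃' " => IPCFormula.imp

/-- Derivability from a set of hypotheses Γ in the Hilbert system with
axiom schemes IPC1, IPC2, Peirce and the rule modus ponens. -/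
inductive IPCDeriv : Set IPCFormula → IPCFormula → Prop where
  | hyp {Γ : Set IPCFormula} {X : IPCFormula} : X ∈ Γ → IPCDeriv Γ X
  | ipc1 {Γ : Set IPCFormula} (X Y : IPCFormula) :
      IPCDeriv Γ (X ⊃' (Y ⊃' X))
  | ipc2 {Γ : Set IPCFormula} (X Y Z : IPCFormula) :
      IPCDeriv Γ ((X ⊃' (Y ⊃' Z)) ⊃' ((X ⊃' Y) ⊃' (X ⊃' Z)))
  | peirce {Γ : Set IPCFormula} (X Y : IPCFormula) :
      IPCDeriv Γ (((X ⊃' Y) ⊃' X) ⊃' X)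
  | mp {Γ : Set IPCFormula} {X Y : IPCFormula} :
      IPCDeriv Γ (X ⊃' Y) → IPCDeriv Γ X → IPCDeriv Γ Y

/-- A theorem of IPC: derivable from no hypotheses. -/
def IPCThm (X : IPCFormula) : Prop := IPCDeriv ∅ X

/-- Disjunction defined within IPC: X ∨ Y := (X ⊃ Y) ⊃ Y. -/
def IPCFormula.disj (X Y : IPCFormula) : IPCFormula := (X ⊃' Y) ⊃' Y

theorem IPCDeriv.mono {Γ Δ : Set IPCFormula} {A : IPCFormula}
    (h : IPCDeriv Γ A) (hs : Γ ⊆ Δ) : IPCDeriv Δ A := by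
  induction h with
  | hyp hx => exact .hyp (hs hx)
  | ipc1 X Y => exact .ipc1 X Y
  | ipc2 X Y Z => exact .ipc2 X Y Z
  | peirce X Y => exact .peirce X Y
  | mp _ _ ih1 ih2 => exact .mp ih1 ih2

theorem IPCDeriv.id (Γ : Set IPCFormula) (A : IPCFormula) :
    IPCDeriv Γ (A ⊃' A) :=
  .mp (.mp (.ipc2 A (A ⊃' A) A) (.ipc1 A (A ⊃' A))) (.ipc1 A A)

theorem IPCDeriv.deduction {Γ : Set IPCFormula} {A B : IPCFormula}
    (h : IPCDeriv (insert A Γ) B) : IPCDeriv Γ (A ⊃' B) := by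
  induction h with
  | @hyp X hx =>
    rcases hx with rfl | hx
    · exact .id Γ X
    · exact .mp (.ipc1 X A) (.hyp hx)
  | ipc1 X Y => exact .mp (.ipc1 _ A) (.ipc1 X Y)
  | ipc2 X Y Z => exact .mp (.ipc1 _ A) (.ipc2 X Y Z)
  | peirce X Y => exact .mp (.ipc1 _ A) (.peirce X Y)
  | @mp X Y _ _ ih1 ih2 => exact .mp (.mp (.ipc2 A X Y) ih1) ih2

theorem stmt_8 (X Y Z : IPCFormula)
    (hX : IPCDeriv {X} Z) (hY : IPCDeriv {Y} Z) :
    IPCDeriv {IPCFormula.disj X Y} Z := by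
  have hXZ : IPCDeriv ∅ (X ⊃' Z) := IPCDeriv.deduction (by simpa using hX)
  have hYZ : IPCDeriv ∅ (Y ⊃' Z) := IPCDeriv.deduction (by simpa using hY)
  set Γ : Set IPCFormula := {IPCFormula.disj X Y}
  set Δ : Set IPCFormula := insert (Z ⊃' Y) Γ
  -- In Δ: X ⊃ Y by composing X ⊃ Z with Z ⊃ Y
  have hXZ' : IPCDeriv Δ (X ⊃' Z) := hXZ.mono (by simp)
  have hZY : IPCDeriv Δ (Z ⊃' Y) := .hyp (by simp [Δ])
  have hXY : IPCDeriv Δ (X ⊃' Y) :=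
    .mp (.mp (.ipc2 X Z Y) (.mp (.ipc1 (Z ⊃' Y) X) hZY)) hXZ'
  have hdisj : IPCDeriv Δ ((X ⊃' Y) ⊃' Y) := .hyp (by simp [Δ, Γ, IPCFormula.disj])
  have hYd : IPCDeriv Δ Y := .mp hdisj hXY
  have hZd : IPCDeriv Δ Z := .mp (hYZ.mono (by simp)) hYd
  exact .mp (.peirce Z Y) (IPCDeriv.deduction hZd)
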